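/- If (M, Δ) is a Garside monoid, then the right domino rule is valid for Δ-normal words of length two: whenever s_1, s_2, s'_1, s'_2, t_0, t_1, t_2 lie in Div(Δ) and satisfy t_0 s'_1 = s_1 t_1 and t_1 s'_2 = s_2 t_2 in M, if the words s_1|s_2, t_0|s'_1 and t_1|s'_2 are Δ-normal, then s'_1|s'_2 is Δ-normal. -/

import Mathlib

/-- Left-divisibility: `f ≼ g` iff `f * c = g` for some `c`. -/
def LDvd {M : Type*} [Monoid M] (f g : M) : Prop := ∃ c, f * c = g

/-- Right-divisibility: `f` right-divides `g` iff `c * f = g` for some `c`. -/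
def RDvd {M : Type*} [Monoid M] (f g : M) : Prop := ∃ c, c * f = g

/-- A Garside monoid: a cancellative monoid `M` together with a Garside element `Δ`,
satisfying conditions (i)–(iv) of the definition. -/
structure GarsideMonoid (M : Type*) [Monoid M] where
  /-- The Garside element. -/
  Δ : M
  mul_left_cancel : ∀ a b c : M, a * b = a * c → b = c
  mul_right_cancel : ∀ a b c : M, b * a = c * a → b = c
  /-- (i) a superadditive length-type map. -/
  lam : M → ℕ
  lam_superadd : ∀ f g : M, lam f + lam g ≤ lam (f * g)
  lam_ne_zero : ∀ g : M, g ≠ 1 → lam g ≠ 0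
  /-- (ii) any two elements admit a left-gcd. -/
  exists_left_gcd : ∀ f g : M, ∃ d, LDvd d f ∧ LDvd d g ∧ ∀ e, LDvd e f → LDvd e g → LDvd e d
  /-- (ii) any two elements admit a right-lcm. -/
  exists_right_lcm : ∀ f g : M, ∃ m, LDvd f m ∧ LDvd g m ∧ ∀ e, LDvd f e → LDvd g e → LDvd m e
  /-- (ii) any two elements admit a right-gcd. -/
  exists_right_gcd : ∀ f g : M, ∃ d, RDvd d f ∧ RDvd d g ∧ ∀ e, RDvd e f → RDvd e g → RDvd e d
  /-- (ii) any two elements admit a left-lcm. -/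
  exists_left_lcm : ∀ f g : M, ∃ m, RDvd f m ∧ RDvd g m ∧ ∀ e, RDvd f e → RDvd g e → RDvd m e
  /-- (iii) the left- and right-divisors of `Δ` coincide. -/
  ldvd_iff_rdvd : ∀ d : M, LDvd d Δ ↔ RDvd d Δ
  /-- (iii) the divisors of `Δ` generate `M`. -/
  closure_div : Submonoid.closure {d : M | LDvd d Δ} = ⊤
  /-- (iv) `Div(Δ)` is finite. -/
  div_finite : {d : M | LDvd d Δ}.Finite

/-- A word `s_1|…|s_p` (with entries in `Div(Δ)`) is `Δ`-normal if, for every `i < p` and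
every `s ∈ Div(Δ)`, `s_i ≺ s` implies that `s` does not left-divide `s_i s_{i+1} ⋯ s_p`. -/
def DNormal {M : Type*} [Monoid M] (G : GarsideMonoid M) (L : List M) : Prop :=
  ∀ i : ℕ, i + 1 < L.length → ∀ s : M, LDvd s G.Δ →
    LDvd (L.getD i 1) s → L.getD i 1 ≠ s → ¬ LDvd s ((L.drop i).prod)

/-
Write `s = s₁' r` for a divisor of `Δ` squeezed between `s₁'` and `s₁' s₂'`; by normality of
`t₁|s₂'` it suffices to show `t₁ r ≼ Δ`. Now `t₁ r ≼ t₁ s₂' = s₂ t₂ ≼ s₂ Δ`, and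
`s₁ t₁ r = t₀ s ≼ t₀ Δ ≼ Δ²`. Conjugation by `Δ` (`u Δ = Δ φ(u)`) is a bijection of `Div(Δ)`
preserving `≼`, so with `s₁ ∂s₁ = Δ` the left-gcd of `∂s₁ Δ` and `s₂ Δ` is `gcd(∂s₁, s₂) Δ`,
and `gcd(∂s₁, s₂) = 1` is exactly normality of `s₁|s₂`. Hence `t₁ r ≼ Δ`.
-/

theorem LDvd.trans {M : Type*} [Monoid M] {a b c : M} (hab : LDvd a b) (hbc : LDvd b c) :
    LDvd a c := by
  obtain ⟨u, rfl⟩ := hab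
  obtain ⟨v, rfl⟩ := hbc
  exact ⟨u * v, (mul_assoc a u v).symm⟩

theorem LDvd.mul_left {M : Type*} [Monoid M] {a b : M} (h : LDvd a b) (c : M) :
    LDvd (c * a) (c * b) := by
  obtain ⟨u, rfl⟩ := h
  exact ⟨u, mul_assoc c a u⟩

theorem RDvd.trans {M : Type*} [Monoid M] {a b c : M} (hab : RDvd a b) (hbc : RDvd b c) :
    RDvd a c := by
  obtain ⟨u, rfl⟩ := hab
  obtain ⟨v, rfl⟩ := hbc
  exact ⟨v * u, mul_assoc v u a⟩

namespace GarsideMonoid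

theorem ldvd_of_mul_ldvd_mul_left {M : Type*} [Monoid M] (G : GarsideMonoid M) {a b c : M}
    (h : LDvd (c * a) (c * b)) : LDvd a b := by
  obtain ⟨u, hu⟩ := h
  exact ⟨u, G.mul_left_cancel c _ _ (by rw [← mul_assoc, hu])⟩

variable {M : Type*} [Monoid M] (G : GarsideMonoid M)

theorem exists_delta_mul_eq_mul_delta {u : M} (hu : LDvd u G.Δ) :
    ∃ v, LDvd v G.Δ ∧ G.Δ * v = u * G.Δ := by
  obtain ⟨v, huv⟩ := hu
  obtain ⟨w, hvw⟩ := (G.ldvd_iff_rdvd v).mpr ⟨u, huv⟩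
  refine ⟨w, (G.ldvd_iff_rdvd w).mpr ⟨v, hvw⟩, ?_⟩
  calc G.Δ * w = u * v * w := by rw [huv]
    _ = u * G.Δ := by rw [mul_assoc, hvw]

theorem exists_mul_delta_eq_delta_mul {v : M} (hv : LDvd v G.Δ) :
    ∃ u, LDvd u G.Δ ∧ u * G.Δ = G.Δ * v := by
  obtain ⟨w, hwv⟩ := (G.ldvd_iff_rdvd v).mp hv
  obtain ⟨u, huw⟩ := (G.ldvd_iff_rdvd w).mp ⟨v, hwv⟩
  refine ⟨u, ⟨w, huw⟩, ?_⟩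
  calc u * G.Δ = u * (w * v) := by rw [hwv]
    _ = G.Δ * v := by rw [← mul_assoc, huw]

theorem mul_delta_ldvd_delta_mul_delta {u : M} (hu : LDvd u G.Δ) :
    LDvd (u * G.Δ) (G.Δ * G.Δ) := by
  obtain ⟨v, hv, hvu⟩ := G.exists_delta_mul_eq_mul_delta hu
  exact hvu ▸ hv.mul_left G.Δ

/-- Conjugation by `Δ` reflects left-divisibility. -/
theorem ldvd_of_ldvd_conj {a b a' b' : M} (ha' : G.Δ * a' = a * G.Δ) (hb' : G.Δ * b' = b * G.Δ)
    (hb'Δ : LDvd b' G.Δ) (h : LDvd a' b') : LDvd a b := by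
  obtain ⟨c, hc⟩ := h
  have hcΔ : LDvd c G.Δ :=
    (G.ldvd_iff_rdvd c).mpr (RDvd.trans ⟨a', hc⟩ ((G.ldvd_iff_rdvd b').mp hb'Δ))
  obtain ⟨c₀, -, hc₀⟩ := G.exists_mul_delta_eq_delta_mul hcΔ
  refine ⟨c₀, G.mul_right_cancel G.Δ _ _ ?_⟩
  rw [mul_assoc, hc₀, ← mul_assoc, ← ha', mul_assoc, hc, hb']

theorem ldvd_delta_of_ldvd_mul_delta {a b x : M} (ha : LDvd a G.Δ) (hb : LDvd b G.Δ)
    (hcoprime : ∀ w, LDvd w a → LDvd w b → w = 1)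
    (hxa : LDvd x (a * G.Δ)) (hxb : LDvd x (b * G.Δ)) : LDvd x G.Δ := by
  obtain ⟨a', ha'Δ, ha'⟩ := G.exists_delta_mul_eq_mul_delta ha
  obtain ⟨b', hb'Δ, hb'⟩ := G.exists_delta_mul_eq_mul_delta hb
  obtain ⟨g, hga, hgb, hg⟩ := G.exists_left_gcd (a * G.Δ) (b * G.Δ)
  obtain ⟨w, rfl⟩ : LDvd G.Δ g := hg G.Δ ⟨a', ha'⟩ ⟨b', hb'⟩
  have hwa' : LDvd w a' := G.ldvd_of_mul_ldvd_mul_left (ha' ▸ hga)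
  have hwb' : LDvd w b' := G.ldvd_of_mul_ldvd_mul_left (hb' ▸ hgb)
  obtain ⟨w₀, -, hw₀⟩ := G.exists_mul_delta_eq_delta_mul (hwa'.trans ha'Δ)
  have hw₀_one : w₀ = 1 :=
    hcoprime w₀ (G.ldvd_of_ldvd_conj hw₀.symm ha' ha'Δ hwa')
      (G.ldvd_of_ldvd_conj hw₀.symm hb' hb'Δ hwb')
  have hg_eq : G.Δ * w = G.Δ := by rw [← hw₀, hw₀_one, one_mul]
  exact hg_eq ▸ hg x hxa hxb

theorem dNormal_pair_iff {a b : M} :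
    DNormal G [a, b] ↔ ∀ w, LDvd (a * w) G.Δ → LDvd w b → w = 1 := by
  constructor
  · intro hab w haw hwb
    by_contra hw
    refine hab 0 (by simp) (a * w) haw ⟨w, rfl⟩ (fun ha => hw ?_) ?_
    · exact G.mul_left_cancel a w 1 (by simpa using ha.symm)
    · simpa using hwb.mul_left a
  · rintro h i hi _ hsΔ ⟨r, rfl⟩ hne hdvd
    obtain rfl : i = 0 := by simp at hi; omega
    simp only [List.getD_cons_zero, List.drop_zero, List.prod_cons, List.prod_nil,
      mul_one] at hne hdvd hsΔ
    rw [h r hsΔ (G.ldvd_of_mul_ldvd_mul_left hdvd), mul_one] at hne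
    exact hne rfl

theorem ldvd_delta_of_dNormal {a b x : M} (hab : DNormal G [a, b]) (ha : LDvd a G.Δ)
    (hb : LDvd b G.Δ) (hax : LDvd (a * x) (G.Δ * G.Δ)) (hxb : LDvd x (b * G.Δ)) :
    LDvd x G.Δ := by
  obtain ⟨a', haa', ha'Δ⟩ : ∃ a', a * a' = G.Δ ∧ LDvd a' G.Δ := by
    obtain ⟨a', haa'⟩ := ha
    exact ⟨a', haa', (G.ldvd_iff_rdvd a').mpr ⟨a, haa'⟩⟩
  refine G.ldvd_delta_of_ldvd_mul_delta ha'Δ hb (fun w hwa' hwb => ?_) ?_ hxb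
  · exact (G.dNormal_pair_iff.mp hab) w (haa' ▸ hwa'.mul_left a) hwb
  · exact G.ldvd_of_mul_ldvd_mul_left (c := a) (by rwa [← mul_assoc, haa'])

end GarsideMonoid

theorem garsideMonoid_right_domino_rule_general {M : Type*} [Monoid M] (G : GarsideMonoid M)
    (s₁ s₂ s₁' s₂' t₀ t₁ t₂ : M)
    (hs₁ : LDvd s₁ G.Δ) (hs₂ : LDvd s₂ G.Δ)
    (ht₀ : LDvd t₀ G.Δ) (ht₂ : LDvd t₂ G.Δ)
    (e₁ : t₀ * s₁' = s₁ * t₁) (e₂ : t₁ * s₂' = s₂ * t₂)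
    (n₁ : DNormal G [s₁, s₂]) (n₃ : DNormal G [t₁, s₂']) :
    DNormal G [s₁', s₂'] := by
  rw [G.dNormal_pair_iff] at n₃ ⊢
  intro r hr hrs₂'
  refine n₃ r (G.ldvd_delta_of_dNormal n₁ hs₁ hs₂ ?_ ?_) hrs₂'
  · rw [← mul_assoc, ← e₁, mul_assoc]
    exact (hr.mul_left t₀).trans (G.mul_delta_ldvd_delta_mul_delta ht₀)
  · exact (hrs₂'.mul_left t₁).trans (e₂ ▸ ht₂.mul_left s₂)

/-- In a Garside monoid `(M, Δ)`, the right domino rule is valid for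
`Δ`-normal words of length two. -/
theorem garsideMonoid_right_domino_rule {M : Type*} [Monoid M] (G : GarsideMonoid M)
    (s₁ s₂ s₁' s₂' t₀ t₁ t₂ : M)
    (hs₁ : LDvd s₁ G.Δ) (hs₂ : LDvd s₂ G.Δ) (hs₁' : LDvd s₁' G.Δ) (hs₂' : LDvd s₂' G.Δ)
    (ht₀ : LDvd t₀ G.Δ) (ht₁ : LDvd t₁ G.Δ) (ht₂ : LDvd t₂ G.Δ)
    (e₁ : t₀ * s₁' = s₁ * t₁) (e₂ : t₁ * s₂' = s₂ * t₂)
    (n₁ : DNormal G [s₁, s₂]) (n₂ : DNormal G [t₀, s₁']) (n₃ : DNormal G [t₁, s₂']) :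
    DNormal G [s₁', s₂'] :=
  garsideMonoid_right_domino_rule_general G s₁ s₂ s₁' s₂' t₀ t₁ t₂ hs₁ hs₂ ht₀ ht₂ e₁ e₂ n₁ n₃
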